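/- arXiv:1111.7276 — 2 statements merged into one kernel-verified Lean document; each statement's English description precedes it below -/
import Mathlib

section
/- For every C[K]-module V and every C[M]-module W (viewed as a C[P]-module via the projection P → M), there is a C-linear bijection j : Hom_{C[G]}(ind_K^G V, Ind_P^G W) → Hom_{C[M]}(ind_{K∩M}^M V_{K∩N}, W), where for each intertwiner I, j(I) is the unique C[M]-linear map sending [1, v̄] to (I([1,v]))(1) for all v ∈ V. Moreover j is natural in W: for every C[M]-linear map α : W' → W and every I' ∈ Hom_{C[G]}(ind_K^G V, Ind_P^G W'), one has j(Ind_P^G(α) ∘ I') = α ∘ j(I'), where Ind_P^G(α) is post-composition of functions with α. -/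
open scoped Classical

noncomputable section
namespace Paper

variable {C : Type} [Field C] {G : Type} [Group G]

/-- The compactly induced module `ind_K^G V`, as a `C`-submodule of `G → V`. -/
def cInd (K : Subgroup G) {V : Type} [AddCommGroup V] [Module C V]
    (ρ : Representation C ↥K V) : Submodule C (G → V) where
  carrier := {f | (∀ (k : ↥K) (x : G), f (↑k * x) = ρ k (f x)) ∧
    ∃ S : Finset G, ∀ x : G, f x ≠ 0 → ∃ s ∈ S, ∃ k ∈ K, x = k * s}
  add_mem' := by
    rintro a b ⟨ha1, Sa, ha2⟩ ⟨hb1, Sb, hb2⟩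
    refine ⟨fun k x => by simp [ha1 k x, hb1 k x], Sa ∪ Sb, fun x hx => ?_⟩
    by_cases h : a x ≠ 0
    · obtain ⟨s, hs, k, hk, h'⟩ := ha2 x h
      exact ⟨s, Finset.mem_union_left _ hs, k, hk, h'⟩
    · push_neg at h
      have hbx : b x ≠ 0 := by
        intro hb0; apply hx; simp only [Pi.add_apply, h, hb0, add_zero]
      obtain ⟨s, hs, k, hk, h'⟩ := hb2 x hbx
      exact ⟨s, Finset.mem_union_right _ hs, k, hk, h'⟩
  zero_mem' := ⟨fun k x => by simp, ∅, fun x hx => absurd rfl hx⟩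
  smul_mem' := by
    rintro c a ⟨ha1, Sa, ha2⟩
    refine ⟨fun k x => by simp [ha1 k x], Sa, fun x hx => ?_⟩
    refine ha2 x (fun h0 => hx ?_)
    simp only [Pi.smul_apply, h0, smul_zero]

/-- The (full) induced module `Ind_P^G W`, as a `C`-submodule of `G → W`. -/
def fInd (P : Subgroup G) {W : Type} [AddCommGroup W] [Module C W]
    (τ : Representation C ↥P W) : Submodule C (G → W) where
  carrier := {f | ∀ (p : ↥P) (x : G), f (↑p * x) = τ p (f x)}
  add_mem' := by intro a b ha hb p x; simp [ha p x, hb p x]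
  zero_mem' := by intro p x; simp
  smul_mem' := by intro c a ha p x; simp [ha p x]

/-- Right translation action of `G` on `ind_K^G V`. -/
def cIndRep (K : Subgroup G) {V : Type} [AddCommGroup V] [Module C V]
    (ρ : Representation C ↥K V) : Representation C G ↥(cInd K ρ) where
  toFun g :=
    { toFun := fun f => ⟨fun x => (f : G → V) (x * g), by
        refine ⟨fun k x => ?_, ?_⟩
        · show (f : G → V) ((↑k * x) * g) = ρ k ((f : G → V) (x * g))
          rw [mul_assoc]; exact f.2.1 k (x * g)
        · obtain ⟨S, hS⟩ := f.2.2
          refine ⟨S.image (· * g⁻¹), fun x hx => ?_⟩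
          obtain ⟨s, hs, k, hk, h'⟩ := hS (x * g) hx
          refine ⟨s * g⁻¹, Finset.mem_image_of_mem _ hs, k, hk, ?_⟩
          rw [← mul_assoc, ← h', mul_assoc, mul_inv_cancel, mul_one]⟩
      map_add' := fun a b => rfl
      map_smul' := fun c a => rfl }
  map_one' := by ext f x; simp
  map_mul' := fun a b => by ext f x; simp [mul_assoc]

/-- Right translation action of `G` on `Ind_P^G W`. -/
def fIndRep (P : Subgroup G) {W : Type} [AddCommGroup W] [Module C W]
    (τ : Representation C ↥P W) : Representation C G ↥(fInd P τ) where
  toFun g :=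
    { toFun := fun f => ⟨fun x => (f : G → W) (x * g), by
        intro p x
        show (f : G → W) ((↑p * x) * g) = τ p ((f : G → W) (x * g))
        rw [mul_assoc]; exact f.2 p (x * g)⟩
      map_add' := fun a b => rfl
      map_smul' := fun c a => rfl }
  map_one' := by ext f x; simp
  map_mul' := fun a b => by ext f x; simp [mul_assoc]

/-- Equivariant `C`-linear maps between two representations of a monoid `Γ`. -/
def equivHom {Γ : Type} [Monoid Γ] {X Y : Type} [AddCommGroup X] [Module C X]
    [AddCommGroup Y] [Module C Y] (σ : Representation C Γ X) (τ : Representation C Γ Y) :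
    Submodule C (X →ₗ[C] Y) where
  carrier := {φ | ∀ γ : Γ, φ ∘ₗ σ γ = τ γ ∘ₗ φ}
  add_mem' := by
    intro a b ha hb γ; ext x
    have h1 := LinearMap.congr_fun (ha γ) x
    have h2 := LinearMap.congr_fun (hb γ) x
    simp only [LinearMap.comp_apply] at h1 h2 ⊢
    simp [h1, h2]
  zero_mem' := by intro γ; ext x; simp
  smul_mem' := by
    intro c a ha γ; ext x
    have h1 := LinearMap.congr_fun (ha γ) x
    simp only [LinearMap.comp_apply] at h1 ⊢
    simp [h1]

/-- The element `[1,v]` of `ind_K^G V` : the function supported on `K` with value `v` at `1`. -/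
def unitFn (K : Subgroup G) {V : Type} [AddCommGroup V] [Module C V]
    (ρ : Representation C ↥K V) (v : V) : G → V :=
  fun g => if h : g ∈ K then ρ ⟨g, h⟩ v else 0

lemma unitFn_mem (K : Subgroup G) {V : Type} [AddCommGroup V] [Module C V]
    (ρ : Representation C ↥K V) (v : V) : unitFn K ρ v ∈ cInd K ρ := by
  constructor
  · intro k x
    by_cases hx : x ∈ K
    · have hkx : (↑k * x) ∈ K := mul_mem k.2 hx
      simp only [unitFn, dif_pos hx, dif_pos hkx]
      have : (⟨↑k * x, hkx⟩ : ↥K) = k * ⟨x, hx⟩ := rfl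
      rw [this, map_mul]; rfl
    · have hkx : (↑k * x) ∉ K := by
        intro h
        exact hx (by simpa using mul_mem (inv_mem k.2) h)
      simp [unitFn, dif_neg hx, dif_neg hkx]
  · refine ⟨{1}, fun x hx => ⟨1, Finset.mem_singleton_self 1, x, ?_, (mul_one x).symm⟩⟩
    by_contra hxK
    exact hx (by simp [unitFn, dif_neg hxK])

/-- `[1,v]` as an element of the submodule. -/
def unitElt (K : Subgroup G) {V : Type} [AddCommGroup V] [Module C V]
    (ρ : Representation C ↥K V) (v : V) : ↥(cInd K ρ) :=
  ⟨unitFn K ρ v, unitFn_mem K ρ v⟩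

/-- The subspace of `V` spanned by the elements `ρ(n)v - v`, `n ∈ K ⊓ N`. -/
def coinvKer (K N : Subgroup G) {V : Type} [AddCommGroup V] [Module C V]
    (ρ : Representation C ↥K V) : Submodule C V :=
  Submodule.span C {x | ∃ (n : G) (hn : n ∈ K ⊓ N) (v : V), x = ρ ⟨n, hn.1⟩ v - v}

/-- The representation of `K ⊓ M` on the coinvariants `V_{K ⊓ N}`. -/
def coinvRep (K M N : Subgroup G) {V : Type} [AddCommGroup V] [Module C V]
    (ρ : Representation C ↥K V)
    (hnorm : ∀ (m : ↥(K ⊓ M)) (n : G), n ∈ K ⊓ N → ↑m * n * (↑m)⁻¹ ∈ K ⊓ N) :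
    Representation C ↥(K ⊓ M) (V ⧸ coinvKer K N ρ) where
  toFun m := Submodule.mapQ _ _ (ρ ⟨↑m, m.2.1⟩) (by
    rw [coinvKer, Submodule.span_le]
    rintro x ⟨n, hn, v, rfl⟩
    refine Submodule.mem_comap.mpr ?_
    have key : ρ ⟨↑m, m.2.1⟩ (ρ ⟨n, hn.1⟩ v - v)
        = ρ ⟨↑m * n * (↑m)⁻¹, (hnorm m n hn).1⟩ (ρ ⟨↑m, m.2.1⟩ v) - ρ ⟨↑m, m.2.1⟩ v := by
      rw [map_sub]
      congr 1
      have h2 : (⟨↑m * n * (↑m)⁻¹, (hnorm m n hn).1⟩ : ↥K) * ⟨↑m, m.2.1⟩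
          = ⟨↑m, m.2.1⟩ * ⟨n, hn.1⟩ := by
        ext; simp [mul_assoc]
      calc ρ ⟨↑m, m.2.1⟩ (ρ ⟨n, hn.1⟩ v) = (ρ (⟨↑m, m.2.1⟩ * ⟨n, hn.1⟩)) v := by
            rw [map_mul]; rfl
        _ = ρ (⟨↑m * n * (↑m)⁻¹, (hnorm m n hn).1⟩ * ⟨↑m, m.2.1⟩) v := by rw [h2]
        _ = _ := by rw [map_mul]; rfl
    rw [key]
    exact Submodule.subset_span ⟨↑m * n * (↑m)⁻¹, hnorm m n hn, ρ ⟨↑m, m.2.1⟩ v, rfl⟩)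
  map_one' := by
    refine LinearMap.ext fun x => ?_
    obtain ⟨v, rfl⟩ := Submodule.Quotient.mk_surjective _ x
    rw [Submodule.mapQ_apply]
    have h1 : (⟨((1 : ↥(K ⊓ M)) : G), (1 : ↥(K ⊓ M)).2.1⟩ : ↥K) = 1 := by ext; rfl
    rw [h1, map_one]
    rfl
  map_mul' := by
    intro a b
    refine LinearMap.ext fun x => ?_
    obtain ⟨v, rfl⟩ := Submodule.Quotient.mk_surjective _ x
    have h1 : (⟨((a * b : ↥(K ⊓ M)) : G), (a * b).2.1⟩ : ↥K)
        = ⟨↑a, a.2.1⟩ * ⟨↑b, b.2.1⟩ := by ext; rfl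
    simp only [Submodule.mapQ_apply, Module.End.mul_apply, h1, map_mul]

/-- The inclusion of `(K ⊓ M).subgroupOf M` into `K ⊓ M`. -/
def toKM (K M : Subgroup G) : ↥((K ⊓ M).subgroupOf M) →* ↥(K ⊓ M) where
  toFun x := ⟨↑↑x, x.2⟩
  map_one' := rfl
  map_mul' _ _ := rfl

def rhoBar (K M N : Subgroup G) {V : Type} [AddCommGroup V] [Module C V]
    (ρ : Representation C ↥K V)
    (hnorm : ∀ (m : ↥(K ⊓ M)) (n : G), n ∈ K ⊓ N → ↑m * n * (↑m)⁻¹ ∈ K ⊓ N) :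
    Representation C ↥((K ⊓ M).subgroupOf M) (V ⧸ coinvKer K N ρ) :=
  (coinvRep K M N ρ hnorm).comp (toKM K M)

def cIndBar (K M N : Subgroup G) {V : Type} [AddCommGroup V] [Module C V]
    (ρ : Representation C ↥K V)
    (hnorm : ∀ (m : ↥(K ⊓ M)) (n : G), n ∈ K ⊓ N → ↑m * n * (↑m)⁻¹ ∈ K ⊓ N) :
    Submodule C (↥M → V ⧸ coinvKer K N ρ) :=
  cInd ((K ⊓ M).subgroupOf M) (rhoBar K M N ρ hnorm)

def tauM {P M : Subgroup G} (hMP : M ≤ P) {W : Type} [AddCommGroup W] [Module C W]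
    (τP : Representation C ↥P W) : Representation C ↥M W :=
  τP.comp (Subgroup.inclusion hMP)


/-- The space `Hom_{C[G]}(ind_K^G V, Ind_P^G W)` of intertwiners. -/
def HomG (K P : Subgroup G) {V W : Type} [AddCommGroup V] [Module C V]
    [AddCommGroup W] [Module C W]
    (ρ : Representation C ↥K V) (τP : Representation C ↥P W) :
    Submodule C (↥(cInd K ρ) →ₗ[C] ↥(fInd P τP)) :=
  equivHom (cIndRep K ρ) (fIndRep P τP)

/-- The space `Hom_{C[M]}(ind_{K∩M}^M V_{K∩N}, W)`. -/
def HomBar (K P M N : Subgroup G) (hMP : M ≤ P) {V W : Type} [AddCommGroup V] [Module C V]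
    [AddCommGroup W] [Module C W] (ρ : Representation C ↥K V)
    (hnorm : ∀ (m : ↥(K ⊓ M)) (n' : G), n' ∈ K ⊓ N → ↑m * n' * (↑m)⁻¹ ∈ K ⊓ N)
    (τP : Representation C ↥P W) :
    Submodule C (↥(cIndBar K M N ρ hnorm) →ₗ[C] W) :=
  equivHom (cIndRep ((K ⊓ M).subgroupOf M) (rhoBar K M N ρ hnorm)) (tauM hMP τP)

/-- The element `[1, v̄]` of `ind_{K∩M}^M V_{K∩N}`. -/
def unitBar (K M N : Subgroup G) {V : Type} [AddCommGroup V] [Module C V]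
    (ρ : Representation C ↥K V)
    (hnorm : ∀ (m : ↥(K ⊓ M)) (n' : G), n' ∈ K ⊓ N → ↑m * n' * (↑m)⁻¹ ∈ K ⊓ N)
    (v : V) : ↥(cIndBar K M N ρ hnorm) :=
  unitElt ((K ⊓ M).subgroupOf M) (rhoBar K M N ρ hnorm) (Submodule.Quotient.mk v)

/-- The characterizing property of `j` : `j(I) = u` iff `u([1,v̄]) = (I [1,v])(1)`
for all `v ∈ V`. -/
def charJ (K P M N : Subgroup G) {V W : Type} [AddCommGroup V] [Module C V]
    [AddCommGroup W] [Module C W] (ρ : Representation C ↥K V)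
    (hnorm : ∀ (m : ↥(K ⊓ M)) (n' : G), n' ∈ K ⊓ N → ↑m * n' * (↑m)⁻¹ ∈ K ⊓ N)
    (τP : Representation C ↥P W)
    (I : ↥(cInd K ρ) →ₗ[C] ↥(fInd P τP)) (u : ↥(cIndBar K M N ρ hnorm) →ₗ[C] W) : Prop :=
  ∀ v : V, u (unitBar K M N ρ hnorm v) = (↑(I (unitElt K ρ v)) : G → W) 1

/-!
Both Hom spaces are identified with `Hom_{K∩M}(V_{K∩N}, W)`. Frobenius reciprocity for compact
induction, `Hom_Γ(ind_H^Γ X, Y) ≅ Hom_H(X, Y)`, `u ↦ (x ↦ u [1,x])`, with inverse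
`ℓ ↦ (f ↦ ∑_{Hx ∈ H\Γ} x⁻¹ · ℓ(f x))`, is used for `K ≤ G` and for `K∩M ≤ M`. Since `G = PK`,
a `K`-map `V → Ind_P^G W` is determined by its values at `1`, which gives
`Hom_K(V, Ind_P^G W) ≅ Hom_{K∩P}(V, W)`. Finally `N` acts trivially on `W` and
`K∩P = (K∩M)(K∩N)`, so a `K∩P`-map `V → W` is the same as a `K∩M`-map `V_{K∩N} → W`.
The composite sends `I` to the map `[1,v̄] ↦ I([1,v])(1)`; it is determined by these values,
and hence natural in `W`, because the translates of the `[1,x]` span a compactly induced module.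
-/

lemma comp_mem_equivHom {Γ : Type} [Monoid Γ] {X Y Z : Type} [AddCommGroup X] [Module C X]
    [AddCommGroup Y] [Module C Y] [AddCommGroup Z] [Module C Z]
    {σ : Representation C Γ X} {τ : Representation C Γ Y} {τ' : Representation C Γ Z}
    {α : Y →ₗ[C] Z} {φ : X →ₗ[C] Y} (hα : α ∈ equivHom τ τ') (hφ : φ ∈ equivHom σ τ) :
    α ∘ₗ φ ∈ equivHom σ τ' := fun γ => by
  rw [LinearMap.comp_assoc, hφ γ, ← LinearMap.comp_assoc, hα γ, LinearMap.comp_assoc]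

lemma apply_rep_of_mem_equivHom {Γ : Type} [Monoid Γ] {X Y : Type} [AddCommGroup X]
    [Module C X] [AddCommGroup Y] [Module C Y] {σ : Representation C Γ X}
    {τ : Representation C Γ Y} {φ : X →ₗ[C] Y} (hφ : φ ∈ equivHom σ τ) (γ : Γ) (x : X) :
    φ (σ γ x) = τ γ (φ x) :=
  LinearMap.congr_fun (hφ γ) x

section Frobenius

variable {Γ : Type} [Group Γ] (H : Subgroup Γ) {X : Type} [AddCommGroup X] [Module C X]
  (σ : Representation C ↥H X)

lemma unitFn_of_mem (v : X) {g : Γ} (hg : g ∈ H) : unitFn H σ v g = σ ⟨g, hg⟩ v :=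
  dif_pos hg

lemma unitFn_of_notMem (v : X) {g : Γ} (hg : g ∉ H) : unitFn H σ v g = 0 :=
  dif_neg hg

lemma unitFn_one (v : X) : unitFn H σ v 1 = v := by
  rw [unitFn_of_mem H σ v (one_mem H)]
  exact congr($(map_one σ) v)

lemma unitElt_coe (v : X) : ((unitElt H σ v : ↥(cInd H σ)) : Γ → X) = unitFn H σ v := rfl

lemma cInd_apply_of_mul_inv_mem (f : ↥(cInd H σ)) {x y : Γ} (h : y * x⁻¹ ∈ H) :
    (f : Γ → X) y = σ ⟨y * x⁻¹, h⟩ ((f : Γ → X) x) := by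
  simpa using f.2.1 ⟨y * x⁻¹, h⟩ x

def unitEltₗ : X →ₗ[C] ↥(cInd H σ) where
  toFun := unitElt H σ
  map_add' v w := by
    ext x; by_cases hx : x ∈ H <;> simp [unitElt, unitFn, hx]
  map_smul' c v := by
    ext x; by_cases hx : x ∈ H <;> simp [unitElt, unitFn, hx]

lemma cIndRep_unitElt (h : ↥H) (v : X) :
    cIndRep H σ ↑h (unitElt H σ v) = unitElt H σ (σ h v) := by
  ext x
  show unitFn H σ v (x * ↑h) = unitFn H σ (σ h v) x
  by_cases hx : x ∈ H
  · rw [unitFn_of_mem H σ v (mul_mem hx h.2), unitFn_of_mem H σ _ hx, ← Module.End.mul_apply,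
      ← map_mul]
    rfl
  · have hxh : x * ↑h ∉ H := fun hc => hx (by simpa using mul_mem hc (inv_mem h.2))
    rw [unitFn_of_notMem H σ v hxh, unitFn_of_notMem H σ _ hx]

/-- The translates `g · [1,v]` span `ind_H^Γ X`: subtracting `a⁻¹ · [1, f a]` kills `f` on
the coset `H a` without enlarging its support, so induct on a finite set of coset representatives. -/
lemma span_translates_unitElt :
    Submodule.span C (Set.range fun gv : Γ × X => cIndRep H σ gv.1 (unitElt H σ gv.2)) = ⊤ := by
  refine Submodule.eq_top_iff'.mpr fun f => ?_
  obtain ⟨S, hS⟩ := f.2.2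
  induction S using Finset.induction_on generalizing f with
  | empty =>
    convert Submodule.zero_mem _
    ext x
    by_contra hx
    obtain ⟨s, hs, -⟩ := hS x hx
    exact Finset.notMem_empty s hs
  | @insert a S _ ih =>
    set t := cIndRep H σ a⁻¹ (unitElt H σ ((f : Γ → X) a))
    have ht : ∀ x, (t : Γ → X) x = unitFn H σ ((f : Γ → X) a) (x * a⁻¹) := fun x => rfl
    have hsupp : ∀ x, ((f - t : ↥(cInd H σ)) : Γ → X) x ≠ 0 → ∃ s ∈ S, ∃ k ∈ H, x = k * s := by
      intro x hx
      have hxa : x * a⁻¹ ∉ H := fun hxa => hx <| by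
        simp [ht, unitFn_of_mem H σ _ hxa, ← cInd_apply_of_mul_inv_mem H σ f hxa]
      have hfx : (f : Γ → X) x ≠ 0 := by
        simpa [ht, unitFn_of_notMem H σ _ hxa] using hx
      obtain ⟨s, hs, k, hk, rfl⟩ := hS x hfx
      rcases Finset.mem_insert.mp hs with rfl | hs
      · exact absurd (by simpa using hk) hxa
      · exact ⟨s, hs, k, hk, rfl⟩
    rw [← sub_add_cancel f t]
    exact add_mem (ih (f - t) hsupp) (Submodule.subset_span ⟨(a⁻¹, (f : Γ → X) a), rfl⟩)

variable {Y : Type} [AddCommGroup Y] [Module C Y] {τ : Representation C Γ Y}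

lemma eq_of_unitElt {u u' : ↥(cInd H σ) →ₗ[C] Y}
    (hu : u ∈ equivHom (cIndRep H σ) τ) (hu' : u' ∈ equivHom (cIndRep H σ) τ)
    (h : ∀ v : X, u (unitElt H σ v) = u' (unitElt H σ v)) : u = u' :=
  LinearMap.ext_on_range (span_translates_unitElt H σ) fun ⟨g, v⟩ => by
    simp only [apply_rep_of_mem_equivHom hu, apply_rep_of_mem_equivHom hu', h]

def rightCosetMul (g : Γ) :
    Quotient (QuotientGroup.rightRel H) ≃ Quotient (QuotientGroup.rightRel H) :=
  Quotient.congr (Equiv.mulRight g) fun a b => by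
    simp [QuotientGroup.rightRel_apply, mul_assoc]

variable {H σ}

/-- `H`-equivariance of `ℓ` makes `x ↦ x⁻¹ · ℓ(f x)` constant on right cosets `H x`. -/
def cosetSummand (ℓ : ↥(equivHom σ (τ.comp H.subtype))) :
    ↥(cInd H σ) →ₗ[C] Quotient (QuotientGroup.rightRel H) → Y where
  toFun f := Quotient.lift (fun x => τ x⁻¹ ((ℓ : X →ₗ[C] Y) ((f : Γ → X) x))) fun a b hab => by
    have hba : b * a⁻¹ ∈ H := QuotientGroup.rightRel_apply.mp hab
    rw [cInd_apply_of_mul_inv_mem H σ f hba, apply_rep_of_mem_equivHom ℓ.2,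
      MonoidHom.comp_apply, ← Module.End.mul_apply, ← map_mul]
    simp
  map_add' f f' := by
    funext q; induction q using Quotient.inductionOn; simp
  map_smul' c f := by
    funext q; induction q using Quotient.inductionOn; simp

lemma cosetSummand_mk (ℓ : ↥(equivHom σ (τ.comp H.subtype))) (f : ↥(cInd H σ)) (x : Γ) :
    cosetSummand ℓ f (Quotient.mk _ x) = τ x⁻¹ ((ℓ : X →ₗ[C] Y) ((f : Γ → X) x)) := rfl

lemma support_cosetSummand_finite (ℓ : ↥(equivHom σ (τ.comp H.subtype))) (f : ↥(cInd H σ)) :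
    (Function.support (cosetSummand ℓ f)).Finite := by
  obtain ⟨S, hS⟩ := f.2.2
  refine (S.finite_toSet.image (Quotient.mk (QuotientGroup.rightRel H))).subset ?_
  intro q hx
  induction q using Quotient.inductionOn with | h x => ?_
  have hfx : (f : Γ → X) x ≠ 0 := fun h0 => hx (by
    simp [cosetSummand_mk, h0])
  obtain ⟨s, hs, k, hk, rfl⟩ := hS x hfx
  exact ⟨s, hs, Quotient.sound (QuotientGroup.rightRel_apply.mpr (by simpa using hk))⟩

lemma cosetSummand_cIndRep (ℓ : ↥(equivHom σ (τ.comp H.subtype))) (g : Γ) (f : ↥(cInd H σ))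
    (q : Quotient (QuotientGroup.rightRel H)) :
    cosetSummand ℓ (cIndRep H σ g f) q = τ g (cosetSummand ℓ f (rightCosetMul H g q)) := by
  induction q using Quotient.inductionOn with | h x => ?_
  show τ x⁻¹ _ = τ g (τ (x * g)⁻¹ _)
  rw [← Module.End.mul_apply, ← map_mul, mul_inv_rev, mul_inv_cancel_left]
  rfl

def cIndLift (ℓ : ↥(equivHom σ (τ.comp H.subtype))) : ↥(cInd H σ) →ₗ[C] Y where
  toFun f := ∑ᶠ q, cosetSummand ℓ f q
  map_add' f f' := by
    simp only [map_add, Pi.add_apply]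
    exact finsum_add_distrib (support_cosetSummand_finite ℓ f)
      (support_cosetSummand_finite ℓ f')
  map_smul' c f := by
    simp only [map_smul, Pi.smul_apply, RingHom.id_apply]
    exact (smul_finsum' c (support_cosetSummand_finite ℓ f)).symm

lemma cIndLift_mem_equivHom (ℓ : ↥(equivHom σ (τ.comp H.subtype))) :
    cIndLift ℓ ∈ equivHom (cIndRep H σ) τ := fun g => by
  ext f
  have hfin : (Function.support fun q => cosetSummand ℓ f (rightCosetMul H g q)).Finite :=
    (support_cosetSummand_finite ℓ f).preimage (rightCosetMul H g).injective.injOn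
  calc ∑ᶠ q, cosetSummand ℓ (cIndRep H σ g f) q
      = ∑ᶠ q, τ g (cosetSummand ℓ f (rightCosetMul H g q)) :=
        finsum_congr (cosetSummand_cIndRep ℓ g f)
    _ = τ g (∑ᶠ q, cosetSummand ℓ f (rightCosetMul H g q)) := (map_finsum _ hfin).symm
    _ = τ g (∑ᶠ q, cosetSummand ℓ f q) := by rw [finsum_comp_equiv (rightCosetMul H g)]

lemma cIndLift_unitElt (ℓ : ↥(equivHom σ (τ.comp H.subtype))) (v : X) :
    cIndLift ℓ (unitElt H σ v) = (ℓ : X →ₗ[C] Y) v := by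
  have hvanish : ∀ q ≠ Quotient.mk (QuotientGroup.rightRel H) 1,
      cosetSummand ℓ (unitElt H σ v) q = 0 := by
    intro q hq
    induction q using Quotient.inductionOn with | h x => ?_
    have hx : x ∉ H := fun hx => hq (Quotient.sound (QuotientGroup.rightRel_apply.mpr
      (by simpa using hx)))
    rw [cosetSummand_mk, unitElt_coe, unitFn_of_notMem H σ v hx, map_zero, map_zero]
  show ∑ᶠ q, cosetSummand ℓ (unitElt H σ v) q = _
  rw [finsum_eq_single _ _ hvanish, cosetSummand_mk, inv_one, map_one, unitElt_coe, unitFn_one]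
  rfl

variable (H σ τ)

def frobenius : ↥(equivHom (cIndRep H σ) τ) ≃ₗ[C] ↥(equivHom σ (τ.comp H.subtype)) where
  toFun u := ⟨(u : ↥(cInd H σ) →ₗ[C] Y) ∘ₗ unitEltₗ H σ, fun h => by
    ext v
    simp [unitEltₗ, ← cIndRep_unitElt, apply_rep_of_mem_equivHom u.2]⟩
  map_add' _ _ := rfl
  map_smul' _ _ := rfl
  invFun ℓ := ⟨cIndLift ℓ, cIndLift_mem_equivHom ℓ⟩
  left_inv u := Subtype.ext <| eq_of_unitElt H σ (cIndLift_mem_equivHom _) u.2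
    fun v => cIndLift_unitElt _ v
  right_inv ℓ := Subtype.ext <| LinearMap.ext (cIndLift_unitElt ℓ)

lemma frobenius_symm_apply_unitElt (ℓ : ↥(equivHom σ (τ.comp H.subtype))) (v : X) :
    (((frobenius H σ τ).symm ℓ : ↥(equivHom (cIndRep H σ) τ)) : ↥(cInd H σ) →ₗ[C] Y)
      (unitElt H σ v) = (ℓ : X →ₗ[C] Y) v :=
  cIndLift_unitElt ℓ v

end Frobenius

section Restriction

variable {K P : Subgroup G} (hG : ∀ g : G, ∃ k ∈ K, ∃ p ∈ P, g = k * p)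
  {V W : Type} [AddCommGroup V] [Module C V] [AddCommGroup W] [Module C W]
  {ρ : Representation C ↥K V} {τ : Representation C ↥P W}

include hG in
lemma exists_eq_mul_PK (g : G) : ∃ pk : ↥P × ↥K, g = ↑pk.1 * ↑pk.2 := by
  obtain ⟨k, hk, p, hp, h⟩ := hG g⁻¹
  exact ⟨(⟨p, hp⟩⁻¹, ⟨k, hk⟩⁻¹), by simp [← mul_inv_rev, ← h]⟩

def factorPK (g : G) : ↥P × ↥K := (exists_eq_mul_PK hG g).choose

lemma factorPK_spec (g : G) : g = ↑(factorPK hG g).1 * ↑(factorPK hG g).2 :=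
  (exists_eq_mul_PK hG g).choose_spec

variable (ρ τ) in
abbrev HomKP : Submodule C (V →ₗ[C] W) :=
  equivHom (ρ.comp (Subgroup.inclusion inf_le_left)) (τ.comp (Subgroup.inclusion inf_le_right))

def extendPK (φ : ↥(HomKP ρ τ)) (v : V) : G → W := fun g =>
  τ (factorPK hG g).1 ((φ : V →ₗ[C] W) (ρ (factorPK hG g).2 v))

/-- Well defined because `p * k = p' * k'` forces `p⁻¹ p' = k k'⁻¹ ∈ K ∩ P`. -/
lemma extendPK_mul (φ : ↥(HomKP ρ τ)) (v : V) (p : ↥P) (k : ↥K) :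
    extendPK hG φ v (↑p * ↑k) = τ p ((φ : V →ₗ[C] W) (ρ k v)) := by
  set p' := (factorPK hG (↑p * ↑k)).1
  set k' := (factorPK hG (↑p * ↑k)).2
  have he : (↑p : G) * ↑k = ↑p' * ↑k' := factorPK_spec hG _
  have hx : (p : G)⁻¹ * p' ∈ K ⊓ P := by
    refine Subgroup.mem_inf.mpr ⟨?_, mul_mem (inv_mem p.2) p'.2⟩
    have : (p : G)⁻¹ * p' = k * (k' : G)⁻¹ := by
      rw [eq_mul_inv_iff_mul_eq, mul_assoc, ← he, inv_mul_cancel_left]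
    rw [this]
    exact mul_mem k.2 (inv_mem k'.2)
  set x : ↥(K ⊓ P) := ⟨_, hx⟩
  have hp' : p' = p * Subgroup.inclusion inf_le_right x := by ext; simp [x]
  have hk : k = Subgroup.inclusion inf_le_left x * k' := by
    ext; simp [x, mul_assoc, ← he]
  have hφ := apply_rep_of_mem_equivHom φ.2 x (ρ k' v)
  simp only [MonoidHom.comp_apply] at hφ
  show τ p' ((φ : V →ₗ[C] W) (ρ k' v)) = _
  rw [hk, map_mul, Module.End.mul_apply, hφ, hp', map_mul, Module.End.mul_apply]

lemma fInd_apply_coe (F : ↥(fInd P τ)) (p : ↥P) : (F : G → W) p = τ p ((F : G → W) 1) := by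
  simpa using F.2 p 1

def extendPKₗ (φ : ↥(HomKP ρ τ)) : V →ₗ[C] ↥(fInd P τ) where
  toFun v := ⟨extendPK hG φ v, fun p g => by
    rw [factorPK_spec hG g, ← mul_assoc, ← Subgroup.coe_mul, extendPK_mul, extendPK_mul, map_mul,
      Module.End.mul_apply]⟩
  map_add' v w := by
    ext g; simp [extendPK]
  map_smul' c v := by
    ext g; simp [extendPK]

lemma extendPKₗ_mem_equivHom (φ : ↥(HomKP ρ τ)) :
    extendPKₗ hG φ ∈ equivHom ρ ((fIndRep P τ).comp K.subtype) := fun k => by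
  ext v g
  show extendPK hG φ (ρ k v) g = extendPK hG φ v (g * k)
  conv_rhs => rw [factorPK_spec hG g, mul_assoc, ← Subgroup.coe_mul, extendPK_mul, map_mul]
  rfl

variable (ρ τ) in
/-- Mackey's formula `(Ind_P^G W)|_K ≅ Ind_{K∩P}^K W` for `G = K P`, composed with Frobenius
reciprocity for `Ind`. -/
def restrictInduced :
    ↥(equivHom ρ ((fIndRep P τ).comp K.subtype)) ≃ₗ[C] ↥(HomKP ρ τ) where
  toFun ℓ := ⟨LinearMap.proj (R := C) (φ := fun _ : G => W) 1 ∘ₗ (fInd P τ).subtype ∘ₗ ℓ, fun x => by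
    ext v
    simp only [LinearMap.comp_apply, MonoidHom.comp_apply, apply_rep_of_mem_equivHom ℓ.2]
    show ((ℓ : V →ₗ[C] ↥(fInd P τ)) v : G → W) (1 * _) = _
    rw [one_mul]
    exact fInd_apply_coe _ (Subgroup.inclusion inf_le_right x)⟩
  map_add' _ _ := rfl
  map_smul' _ _ := rfl
  invFun φ := ⟨extendPKₗ hG φ, extendPKₗ_mem_equivHom hG φ⟩
  left_inv ℓ := by
    ext v g
    show τ _ (((ℓ : V →ₗ[C] ↥(fInd P τ)) (ρ _ v) : G → W) 1) = _
    rw [apply_rep_of_mem_equivHom ℓ.2]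
    show τ _ (((ℓ : V →ₗ[C] ↥(fInd P τ)) v : G → W) (1 * _)) = _
    rw [one_mul, ← (ℓ : V →ₗ[C] ↥(fInd P τ)) v |>.2, Subgroup.coe_subtype, ← factorPK_spec hG g]
  right_inv φ := by
    ext v
    show extendPK hG φ v 1 = _
    simpa using extendPK_mul hG φ v 1 1

end Restriction

section Coinvariants

variable {K P M N : Subgroup G} (hMP : M ≤ P) (hNP : N ≤ P)
  (hKP : ∀ x ∈ K ⊓ P, ∃ m ∈ K ⊓ M, ∃ n' ∈ K ⊓ N, x = m * n')
  (hnorm : ∀ (m : ↥(K ⊓ M)) (n' : G), n' ∈ K ⊓ N → ↑m * n' * (↑m)⁻¹ ∈ K ⊓ N)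
  {V W : Type} [AddCommGroup V] [Module C V] [AddCommGroup W] [Module C W]
  {ρ : Representation C ↥K V} {τP : Representation C ↥P W}
  (hτ : ∀ x : ↥P, (x : G) ∈ N → τP x = 1)

lemma coinvKer_mk_rep {n : G} (hn : n ∈ K ⊓ N) (v : V) :
    (Submodule.Quotient.mk (ρ ⟨n, hn.1⟩ v) : V ⧸ coinvKer K N ρ) = Submodule.Quotient.mk v :=
  (Submodule.Quotient.eq _).mpr (Submodule.subset_span ⟨n, hn, v, rfl⟩)

include hNP hτ in
lemma coinvKer_le_ker (φ : ↥(HomKP ρ τP)) : coinvKer K N ρ ≤ LinearMap.ker (φ : V →ₗ[C] W) := by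
  rw [coinvKer, Submodule.span_le]
  rintro _ ⟨n, hn, v, rfl⟩
  have hφ := apply_rep_of_mem_equivHom φ.2 ⟨n, hn.1, hNP hn.2⟩ v
  simp only [MonoidHom.comp_apply] at hφ
  simp only [SetLike.mem_coe, LinearMap.mem_ker, map_sub, sub_eq_zero]
  exact hφ.trans (by rw [hτ _ hn.2]; rfl)

/-- As `N` acts trivially on `W`, a `K∩P`-map kills the `K∩N`-coinvariance relations;
conversely `K∩P = (K∩M)(K∩N)` recovers `K∩P`-equivariance from `K∩M`-equivariance. -/
def coinvariantsEquiv :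
    ↥(HomKP ρ τP) ≃ₗ[C]
      ↥(equivHom (rhoBar K M N ρ hnorm) ((tauM hMP τP).comp ((K ⊓ M).subgroupOf M).subtype)) where
  toFun φ := ⟨(coinvKer K N ρ).liftQ φ (coinvKer_le_ker hNP hτ φ), fun m => by
    refine Submodule.linearMap_qext _ (LinearMap.ext fun v => ?_)
    exact apply_rep_of_mem_equivHom φ.2 ⟨m, m.2.1, hMP m.1.2⟩ v⟩
  map_add' _ _ := Subtype.ext (Submodule.linearMap_qext _ rfl)
  map_smul' _ _ := Subtype.ext (Submodule.linearMap_qext _ rfl)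
  invFun μ := ⟨(μ : V ⧸ coinvKer K N ρ →ₗ[C] W) ∘ₗ (coinvKer K N ρ).mkQ, fun x => by
    obtain ⟨m, hm, n, hn, hx⟩ := hKP x x.2
    have hρ : ρ (Subgroup.inclusion inf_le_left x) = ρ ⟨m, hm.1⟩ * ρ ⟨n, hn.1⟩ := by
      rw [← map_mul]; congr 1; ext; exact hx
    have hτx : τP (Subgroup.inclusion inf_le_right x) = τP ⟨m, hMP hm.2⟩ := by
      have : Subgroup.inclusion inf_le_right x = ⟨m, hMP hm.2⟩ * ⟨n, hNP hn.2⟩ := by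
        ext; exact hx
      rw [this, map_mul, hτ ⟨n, hNP hn.2⟩ hn.2, mul_one]
    ext v
    simp only [LinearMap.comp_apply, MonoidHom.comp_apply, hρ, hτx, Module.End.mul_apply,
      Submodule.mkQ_apply]
    rw [← coinvKer_mk_rep hn v]
    exact apply_rep_of_mem_equivHom μ.2 ⟨⟨m, hm.2⟩, hm⟩ (Submodule.Quotient.mk (ρ ⟨n, hn.1⟩ v))⟩
  left_inv _ := rfl
  right_inv _ := Subtype.ext (Submodule.linearMap_qext _ rfl)

end Coinvariants

lemma eq_of_unitBar {K P M N : Subgroup G} (hMP : M ≤ P) {V W : Type} [AddCommGroup V]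
    [Module C V] [AddCommGroup W] [Module C W] (ρ : Representation C ↥K V)
    (hnorm : ∀ (m : ↥(K ⊓ M)) (n' : G), n' ∈ K ⊓ N → ↑m * n' * (↑m)⁻¹ ∈ K ⊓ N)
    (τP : Representation C ↥P W) {u u' : ↥(cIndBar K M N ρ hnorm) →ₗ[C] W}
    (hu : u ∈ HomBar K P M N hMP ρ hnorm τP) (hu' : u' ∈ HomBar K P M N hMP ρ hnorm τP)
    (h : ∀ v : V, u (unitBar K M N ρ hnorm v) = u' (unitBar K M N ρ hnorm v)) : u = u' :=
  eq_of_unitElt _ _ hu hu' fun x => by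
    obtain ⟨v, rfl⟩ := Submodule.Quotient.mk_surjective _ x
    exact h v

/-- A `C[M]`-module `W`, viewed as a `C[P]`-module through `P → M`, is encoded by a representation
`τP` of `P` that is trivial on `N`; its `M`-module structure is the restriction `tauM hMP τP`. -/
theorem statement1_general {V : Type} [AddCommGroup V] [Module C V]
    (K P M N : Subgroup G)
    (hMP : M ≤ P) (hNP : N ≤ P)
    (hG : ∀ g : G, ∃ k ∈ K, ∃ p ∈ P, g = k * p)
    (hKP : ∀ x ∈ K ⊓ P, ∃ m ∈ K ⊓ M, ∃ n' ∈ K ⊓ N, x = m * n')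
    (hnorm : ∀ (m : ↥(K ⊓ M)) (n' : G), n' ∈ K ⊓ N → ↑m * n' * (↑m)⁻¹ ∈ K ⊓ N)
    (ρ : Representation C ↥K V) :
    -- existence and uniqueness of the C-linear bijection j, for every W
    (∀ (W : Type) [AddCommGroup W] [Module C W],
      ∀ τP : Representation C ↥P W, (∀ x : ↥P, (x : G) ∈ N → τP x = 1) →
      ∃ j : ↥(HomG K P ρ τP) ≃ₗ[C] ↥(HomBar K P M N hMP ρ hnorm τP),
        (∀ I : ↥(HomG K P ρ τP), charJ K P M N ρ hnorm τP ↑I ↑(j I)) ∧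
        (∀ (I : ↥(HomG K P ρ τP)) (u : ↥(cIndBar K M N ρ hnorm) →ₗ[C] W),
          u ∈ HomBar K P M N hMP ρ hnorm τP →
          charJ K P M N ρ hnorm τP ↑I u → u = ↑(j I))) ∧
    -- naturality of j in W
    (∀ (W W' : Type) [AddCommGroup W] [Module C W] [AddCommGroup W'] [Module C W'],
      ∀ (τP : Representation C ↥P W) (τP' : Representation C ↥P W'),
      (∀ x : ↥P, (x : G) ∈ N → τP x = 1) → (∀ x : ↥P, (x : G) ∈ N → τP' x = 1) →
      ∀ α : W' →ₗ[C] W, (∀ m : ↥M, α ∘ₗ tauM hMP τP' m = tauM hMP τP m ∘ₗ α) →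
      ∀ I' ∈ HomG K P ρ τP',
      ∀ u' ∈ HomBar K P M N hMP ρ hnorm τP',
        charJ K P M N ρ hnorm τP' I' u' →
        ∀ u ∈ HomBar K P M N hMP ρ hnorm τP,
          (∀ v : V, u (unitBar K M N ρ hnorm v) = α ((↑(I' (unitElt K ρ v)) : G → W') 1)) →
          u = α ∘ₗ u') := by
  refine ⟨fun W _ _ τP hτ => ?_, ?_⟩
  · let j : ↥(HomG K P ρ τP) ≃ₗ[C] ↥(HomBar K P M N hMP ρ hnorm τP) :=
      frobenius K ρ (fIndRep P τP) ≪≫ₗ restrictInduced hG ρ τP ≪≫ₗ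
        coinvariantsEquiv hMP hNP hKP hnorm hτ ≪≫ₗ
        (frobenius ((K ⊓ M).subgroupOf M) (rhoBar K M N ρ hnorm) (tauM hMP τP)).symm
    have hj : ∀ I : ↥(HomG K P ρ τP), charJ K P M N ρ hnorm τP ↑I ↑(j I) := fun I v =>
      frobenius_symm_apply_unitElt _ _ _ _ _
    exact ⟨j, hj, fun I u hu hIu => eq_of_unitBar hMP ρ hnorm τP hu (j I).2
      fun v => (hIu v).trans (hj I v).symm⟩
  · intro W W' _ _ _ _ τP τP' _ _ α hα I' _ u' hu' hI'u' u hu hIu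
    exact eq_of_unitBar hMP ρ hnorm τP hu (comp_mem_equivHom hα hu')
      fun v => (hIu v).trans (congrArg α (hI'u' v).symm)

theorem statement1 {V : Type} [AddCommGroup V] [Module C V]
    (K P M N : Subgroup G)
    (hMP : M ≤ P) (hNP : N ≤ P)
    (hNnormal : ∀ p ∈ P, ∀ n' ∈ N, p * n' * p⁻¹ ∈ N)
    (hMN : M ⊓ N = ⊥)
    (hPprod : ∀ p ∈ P, ∃ m ∈ M, ∃ n' ∈ N, p = m * n')
    (hG : ∀ g : G, ∃ k ∈ K, ∃ p ∈ P, g = k * p)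
    (hKP : ∀ x ∈ K ⊓ P, ∃ m ∈ K ⊓ M, ∃ n' ∈ K ⊓ N, x = m * n')
    (hnorm : ∀ (m : ↥(K ⊓ M)) (n' : G), n' ∈ K ⊓ N → ↑m * n' * (↑m)⁻¹ ∈ K ⊓ N)
    (ρ : Representation C ↥K V) :
    -- existence and uniqueness of the C-linear bijection j, for every W
    (∀ (W : Type) [AddCommGroup W] [Module C W],
      ∀ τP : Representation C ↥P W, (∀ x : ↥P, (x : G) ∈ N → τP x = 1) →
      ∃ j : ↥(HomG K P ρ τP) ≃ₗ[C] ↥(HomBar K P M N hMP ρ hnorm τP),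
        (∀ I : ↥(HomG K P ρ τP), charJ K P M N ρ hnorm τP ↑I ↑(j I)) ∧
        (∀ (I : ↥(HomG K P ρ τP)) (u : ↥(cIndBar K M N ρ hnorm) →ₗ[C] W),
          u ∈ HomBar K P M N hMP ρ hnorm τP →
          charJ K P M N ρ hnorm τP ↑I u → u = ↑(j I))) ∧
    -- naturality of j in W
    (∀ (W W' : Type) [AddCommGroup W] [Module C W] [AddCommGroup W'] [Module C W'],
      ∀ (τP : Representation C ↥P W) (τP' : Representation C ↥P W'),
      (∀ x : ↥P, (x : G) ∈ N → τP x = 1) → (∀ x : ↥P, (x : G) ∈ N → τP' x = 1) →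
      ∀ α : W' →ₗ[C] W, (∀ m : ↥M, α ∘ₗ tauM hMP τP' m = tauM hMP τP m ∘ₗ α) →
      ∀ I' ∈ HomG K P ρ τP',
      ∀ u' ∈ HomBar K P M N hMP ρ hnorm τP',
        charJ K P M N ρ hnorm τP' I' u' →
        ∀ u ∈ HomBar K P M N hMP ρ hnorm τP,
          (∀ v : V, u (unitBar K M N ρ hnorm v) = α ((↑(I' (unitElt K ρ v)) : G → W') 1)) →
          u = α ∘ₗ u') :=
  statement1_general K P M N hMP hNP hG hKP hnorm ρ

end Paper
end
end

section
/- For every Φ ∈ H(G,K,V), every m ∈ M and every v ∈ V: the family of elements Φ(nm)(v), indexed by the cosets (N∩K)n ∈ (N∩K)\N, has only finitely many nonzero members; the element Σ_{(N∩K)n ∈ (N∩K)\N} (image of Φ(nm)(v) in V_{K∩N}) is independent of the choice of coset representatives and depends only on the image v̄ of v; and the homomorphism 𝒮', transported to the Hecke algebras via the isomorphisms H(G,K,V) ≅ End_{C[G]}(ind_K^G V) and H(M,K∩M,V_{K∩N}) ≅ End_{C[M]}(ind_{K∩M}^M V_{K∩N}), is given by the formula 𝒮'(Φ)(m)(v̄)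 = Σ_{(N∩K)n ∈ (N∩K)\N} (image of Φ(nm)(v) in V_{K∩N}). -/
/-!
The heart of the matter is an explicit formula for `I₀ = j⁻¹(id)`: for every `f ∈ ind_K^G V`,
`I₀(f)(1)(m) = Σ_{(K∩N)n ∈ (K∩N)\N} f(n m)` in `V_{K∩N}`. Both sides are linear in `f`, and
`ind_K^G V` is spanned by the translates `g·[1,w]`. Writing `g = m' n' k` with `m' ∈ M`, `n' ∈ N`,
`k ∈ K`, equivariance of `I₀` and the action of `P` on `W₀` turn the left side into
`[1, w̄'](m m')` with `w' = ρ(k)w`. On the right side, uniqueness of the decomposition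
`P = M ⋉ N` shows that `n m m' n' ∈ K` forces `m m' ∈ K`, after which a single coset `(K∩N)n`
contributes, with the same value.

Applied to `b[1,v] = Φ ∗ [1,v] = (g ↦ Φ(g)v)`, which is compactly supported by (A1), the formula
is the one for `𝒮'(Φ)(m)(v̄)`. The sum is finite for every compactly supported function,
independent of representatives by left `K`-equivariance, and depends only on `v̄` because
`Φ(g)ρ(n₀) = Φ(g n₀)` and the sum is left `N`-invariant.
-/

open scoped Classical

noncomputable section
namespace Paper

variable {C : Type} [Field C] {G : Type} [Group G]

/-- `End_{C[G]}(ind_K^G V)`. -/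
def EndG (K : Subgroup G) {V : Type} [AddCommGroup V] [Module C V]
    (ρ : Representation C ↥K V) :
    Submodule C (↥(cInd K ρ) →ₗ[C] ↥(cInd K ρ)) :=
  equivHom (cIndRep K ρ) (cIndRep K ρ)

/-- `End_{C[M]}(ind_{K∩M}^M V_{K∩N})`. -/
def EndBar (K M N : Subgroup G) {V : Type} [AddCommGroup V] [Module C V]
    (ρ : Representation C ↥K V)
    (hnorm : ∀ (m : ↥(K ⊓ M)) (n' : G), n' ∈ K ⊓ N → ↑m * n' * (↑m)⁻¹ ∈ K ⊓ N) :
    Submodule C (↥(cIndBar K M N ρ hnorm) →ₗ[C] ↥(cIndBar K M N ρ hnorm)) :=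
  equivHom (cIndRep ((K ⊓ M).subgroupOf M) (rhoBar K M N ρ hnorm))
    (cIndRep ((K ⊓ M).subgroupOf M) (rhoBar K M N ρ hnorm))

/-- Hecke algebra H(G,K,V) as a submodule of `G → End V`. -/
def Hecke (K : Subgroup G) {V : Type} [AddCommGroup V] [Module C V]
    (ρ : Representation C ↥K V) : Submodule C (G → Module.End C V) where
  carrier := {Φ | (∀ (k k' : ↥K) (g : G), Φ (↑k * g * ↑k') = ρ k * Φ g * ρ k') ∧
    ∃ S : Finset G, ∀ g : G, Φ g ≠ 0 → ∃ s ∈ S, ∃ k ∈ K, ∃ k' ∈ K, g = k * s * k'}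
  add_mem' := by
    rintro a b ⟨ha1, Sa, ha2⟩ ⟨hb1, Sb, hb2⟩
    refine ⟨fun k k' g => by simp [ha1 k k' g, hb1 k k' g, mul_add, add_mul],
      Sa ∪ Sb, fun g hg => ?_⟩
    by_cases h : a g ≠ 0
    · obtain ⟨s, hs, hrest⟩ := ha2 g h
      exact ⟨s, Finset.mem_union_left _ hs, hrest⟩
    · push_neg at h
      have hbg : b g ≠ 0 := by
        intro hb0; apply hg; simp only [Pi.add_apply, h, hb0, add_zero]
      obtain ⟨s, hs, hrest⟩ := hb2 g hbg
      exact ⟨s, Finset.mem_union_right _ hs, hrest⟩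
  zero_mem' := ⟨fun k k' g => by simp, ∅, fun g hg => absurd rfl hg⟩
  smul_mem' := by
    rintro c a ⟨ha1, Sa, ha2⟩
    refine ⟨fun k k' g => by
      simp only [Pi.smul_apply, ha1 k k' g, mul_smul_comm, smul_mul_assoc],
      Sa, fun g hg => ?_⟩
    refine ha2 g (fun h0 => hg ?_)
    simp only [Pi.smul_apply, h0, smul_zero]

/-- Convolution action of functions `G → End V` on functions `G → V`. -/
def convAct (K : Subgroup G) {V : Type} [AddCommGroup V] [Module C V]
    (Φ : G → Module.End C V) (f : G → V) : G → V :=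
  fun g => ∑ᶠ q : G ⧸ K, Φ (Quotient.out q) (f ((Quotient.out q)⁻¹ * g))

section InducedModules

variable {V : Type} [AddCommGroup V] [Module C V] {K : Subgroup G} {ρ : Representation C ↥K V}

lemma hecke_apply_mul_left {Φ : G → Module.End C V} (hΦ : Φ ∈ Hecke K ρ) {k : G} (hk : k ∈ K)
    (g : G) : Φ (k * g) = ρ ⟨k, hk⟩ * Φ g := by
  simpa using hΦ.1 ⟨k, hk⟩ 1 g

lemma hecke_apply_mul_right {Φ : G → Module.End C V} (hΦ : Φ ∈ Hecke K ρ) (g : G) {k : G}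
    (hk : k ∈ K) : Φ (g * k) = Φ g * ρ ⟨k, hk⟩ := by
  simpa using hΦ.1 1 ⟨k, hk⟩ g

lemma cIndRep_apply (g : G) (f : ↥(cInd K ρ)) (x : G) :
    (↑(cIndRep K ρ g f) : G → V) x = (f : G → V) (x * g) := rfl

lemma unitFn_apply_mul_inv {f : G → V} (hf : ∀ (k : ↥K) (x : G), f (↑k * x) = ρ k (f x))
    (t x : G) :
    unitFn K ρ (f t) (x * t⁻¹) =
      if Quotient.mk (QuotientGroup.rightRel K) t = Quotient.mk _ x then f x else 0 := by
  simp only [unitFn, Quotient.eq, QuotientGroup.rightRel_apply]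
  split_ifs with h
  · rw [← hf, inv_mul_cancel_right]
  · rfl

lemma cIndRep_unitElt_s4 {k : G} (hk : k ∈ K) (v : V) :
    cIndRep K ρ k (unitElt K ρ v) = unitElt K ρ (ρ ⟨k, hk⟩ v) := by
  ext x
  show unitFn K ρ v (x * k) = unitFn K ρ (ρ ⟨k, hk⟩ v) x
  by_cases hx : x ∈ K
  · rw [unitFn, unitFn, dif_pos (mul_mem hx hk), dif_pos hx, ← Module.End.mul_apply, ← map_mul]
    rfl
  · have hxk : x * k ∉ K := fun h => hx (by simpa using mul_mem h (inv_mem hk))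
    rw [unitFn, unitFn, dif_neg hxk, dif_neg hx]

lemma eq_sum_cIndRep_unitElt (f : ↥(cInd K ρ)) :
    ∃ T : Finset (Quotient (QuotientGroup.rightRel K)), f =
      ∑ q ∈ T, cIndRep K ρ (Quotient.out q)⁻¹ (unitElt K ρ ((f : G → V) (Quotient.out q))) := by
  obtain ⟨S, hS⟩ := f.2.2
  refine ⟨S.image (Quotient.mk _), ?_⟩
  ext x
  rw [AddSubmonoidClass.coe_finsetSum, Finset.sum_apply]
  simp only [cIndRep_apply, unitElt, unitFn_apply_mul_inv f.2.1, Quotient.out_eq,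
    Finset.sum_ite_eq']
  split_ifs with hx
  · rfl
  · by_contra hfx
    obtain ⟨s, hs, k, hk, rfl⟩ := hS x hfx
    refine hx (Finset.mem_image.mpr ⟨s, hs, Quotient.sound ?_⟩)
    simpa [QuotientGroup.rightRel_apply] using inv_mem hk

lemma cInd_induction {p : ↥(cInd K ρ) → Prop} (zero : p 0)
    (add : ∀ f f', p f → p f' → p (f + f'))
    (translate : ∀ (g : G) (v : V), p (cIndRep K ρ g (unitElt K ρ v))) (f : ↥(cInd K ρ)) :
    p f := by
  obtain ⟨T, hT⟩ := eq_sum_cIndRep_unitElt f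
  rw [hT]
  exact Finset.sum_induction _ p add zero fun q _ => translate _ _

lemma convAct_unitFn {Φ : G → Module.End C V} (hΦ : Φ ∈ Hecke K ρ) (v : V) (g : G) :
    convAct K Φ (unitFn K ρ v) g = Φ g v := by
  have off_diagonal : ∀ q : G ⧸ K, q ≠ QuotientGroup.mk g →
      Φ (Quotient.out q) (unitFn K ρ v ((Quotient.out q)⁻¹ * g)) = 0 := by
    intro q hq
    have hq' : (Quotient.out q)⁻¹ * g ∉ K := fun h =>
      hq (by rw [← Quotient.out_eq q]; exact Quotient.sound (QuotientGroup.leftRel_apply.mpr h))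
    rw [unitFn, dif_neg hq', map_zero]
  have hk : (Quotient.out (QuotientGroup.mk g : G ⧸ K))⁻¹ * g ∈ K :=
    QuotientGroup.leftRel_apply.mp (Quotient.mk_out g)
  rw [convAct, finsum_eq_single _ _ off_diagonal, unitFn, dif_pos hk, ← Module.End.mul_apply,
    ← hecke_apply_mul_right hΦ, mul_inv_cancel_left]

end InducedModules

section Coinvariants

variable {V : Type} [AddCommGroup V] [Module C V] {K N : Subgroup G}
  {ρ : Representation C ↥K V}

lemma mk_rho_apply {n : G} (hn : n ∈ K ⊓ N) (v : V) :
    Submodule.Quotient.mk (p := coinvKer K N ρ) (ρ ⟨n, hn.1⟩ v) = Submodule.Quotient.mk v :=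
  (Submodule.Quotient.eq _).mpr (Submodule.subset_span ⟨n, hn, v, rfl⟩)

lemma mk_eq_mk_iff_mul_inv_mem (n₁ n₂ : ↥N) :
    Quotient.mk (QuotientGroup.rightRel ((K ⊓ N).subgroupOf N)) n₁ = Quotient.mk _ n₂ ↔
      (n₂ : G) * (n₁ : G)⁻¹ ∈ K := by
  rw [Quotient.eq, QuotientGroup.rightRel_apply, Subgroup.mem_subgroupOf, Subgroup.mem_inf]
  push_cast
  exact ⟨And.left, fun h => ⟨h, mul_mem n₂.2 (inv_mem n₁.2)⟩⟩

/-- `Σ_{(K∩N)n ∈ (K∩N)\N} f(n g)` in `V_{K∩N}`; as a `finsum` it is `0` when infinitely many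
terms are nonzero. -/
def coinvSum (K N : Subgroup G) (ρ : Representation C ↥K V) (f : G → V) (g : G) :
    V ⧸ coinvKer K N ρ :=
  ∑ᶠ q : Quotient (QuotientGroup.rightRel ((K ⊓ N).subgroupOf N)),
    Submodule.Quotient.mk (f (↑(Quotient.out q) * g))

lemma finite_setOf_apply_ne_zero {f : G → V} (hf : f ∈ cInd K ρ) (g : G) :
    {q : Quotient (QuotientGroup.rightRel ((K ⊓ N).subgroupOf N)) |
      f (↑(Quotient.out q) * g) ≠ 0}.Finite := by
  obtain ⟨S, hS⟩ := hf.2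
  refine Set.Finite.of_injOn (f := fun q => Quotient.mk (QuotientGroup.rightRel K)
    (↑(Quotient.out q) * g)) ?_ ?_ (S.image (Quotient.mk (QuotientGroup.rightRel K))).finite_toSet
  · intro q hq
    obtain ⟨s, hs, k, hk, hks⟩ := hS _ hq
    refine Finset.mem_image.mpr ⟨s, hs, Quotient.sound ?_⟩
    simpa [QuotientGroup.rightRel_apply, hks] using inv_mem hk
  · intro q₁ _ q₂ _ h
    rw [← Quotient.out_eq q₁, ← Quotient.out_eq q₂, mk_eq_mk_iff_mul_inv_mem]
    simpa [QuotientGroup.rightRel_apply, mul_assoc] using Quotient.exact h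

lemma mk_apply_mul_eq_of_mk_eq {f : G → V} (hf : ∀ (k : ↥K) (x : G), f (↑k * x) = ρ k (f x))
    {n₁ n₂ : ↥N}
    (h : Quotient.mk (QuotientGroup.rightRel ((K ⊓ N).subgroupOf N)) n₁ = Quotient.mk _ n₂)
    (g : G) :
    Submodule.Quotient.mk (p := coinvKer K N ρ) (f (↑n₁ * g)) =
      Submodule.Quotient.mk (f (↑n₂ * g)) := by
  have hn : (n₂ : G) * (n₁ : G)⁻¹ ∈ K ⊓ N :=
    Subgroup.mem_inf.mpr ⟨(mk_eq_mk_iff_mul_inv_mem n₁ n₂).mp h, mul_mem n₂.2 (inv_mem n₁.2)⟩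
  have hf' := hf ⟨_, hn.1⟩ (↑n₁ * g)
  rw [show (n₂ : G) * (n₁ : G)⁻¹ * (n₁ * g) = n₂ * g by group] at hf'
  rw [hf', mk_rho_apply hn]

lemma hasFiniteSupport_mk_apply {f : G → V} (hf : f ∈ cInd K ρ) (g : G) :
    Function.HasFiniteSupport fun q : Quotient (QuotientGroup.rightRel ((K ⊓ N).subgroupOf N)) =>
      Submodule.Quotient.mk (p := coinvKer K N ρ) (f (↑(Quotient.out q) * g)) :=
  (finite_setOf_apply_ne_zero hf g).subset fun q hq h0 => hq (by simp [h0])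

variable (K N ρ) in
def coinvSumₗ (g : G) : ↥(cInd K ρ) →ₗ[C] V ⧸ coinvKer K N ρ where
  toFun f := coinvSum K N ρ f g
  map_add' f f' := by
    rw [coinvSum, coinvSum, coinvSum, ← finsum_add_distrib
      (hasFiniteSupport_mk_apply f.2 g) (hasFiniteSupport_mk_apply f'.2 g)]
    exact finsum_congr fun q => Submodule.Quotient.mk_add _
  map_smul' c f := by
    rw [coinvSum, coinvSum, RingHom.id_apply, smul_finsum' c (hasFiniteSupport_mk_apply f.2 g)]
    exact finsum_congr fun q => Submodule.Quotient.mk_smul _ _ _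

lemma coinvSumₗ_apply (g : G) (f : ↥(cInd K ρ)) :
    coinvSumₗ K N ρ g f = coinvSum K N ρ f g := rfl

lemma coinvSum_comp_mul_right (f : G → V) (g x : G) :
    coinvSum K N ρ (fun y => f (y * g)) x = coinvSum K N ρ f (x * g) := by
  simp only [coinvSum, mul_assoc]

lemma coinvSum_cIndRep (g : G) (f : ↥(cInd K ρ)) (x : G) :
    coinvSum K N ρ ↑(cIndRep K ρ g f) x = coinvSum K N ρ f (x * g) :=
  coinvSum_comp_mul_right _ g x

lemma coinvSum_eq_of_out {f : G → V} (hf : ∀ (k : ↥K) (x : G), f (↑k * x) = ρ k (f x))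
    (rep : Quotient (QuotientGroup.rightRel ((K ⊓ N).subgroupOf N)) → ↥N)
    (hrep : ∀ q, Quotient.mk _ (rep q) = q) (g : G) :
    ∑ᶠ q, Submodule.Quotient.mk (p := coinvKer K N ρ) (f (↑(rep q) * g)) = coinvSum K N ρ f g :=
  finsum_congr fun q => mk_apply_mul_eq_of_mk_eq hf (by rw [hrep, Quotient.out_eq]) g

/-- Right translation by `n ∈ N` permutes `(K∩N)\N`, so the sum is left `N`-invariant. -/
lemma coinvSum_mul_left {f : G → V} (hf : ∀ (k : ↥K) (x : G), f (↑k * x) = ρ k (f x)) {n : G}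
    (hn : n ∈ N) (g : G) : coinvSum K N ρ f (n * g) = coinvSum K N ρ f g := by
  let e := Quotient.congr (ra := QuotientGroup.rightRel ((K ⊓ N).subgroupOf N))
    (rb := QuotientGroup.rightRel ((K ⊓ N).subgroupOf N)) (Equiv.mulRight ⟨n, hn⟩)
    fun a b => by
      rw [QuotientGroup.rightRel_apply, QuotientGroup.rightRel_apply, Equiv.coe_mulRight,
        mul_inv_rev, mul_assoc, mul_inv_cancel_left]
  rw [coinvSum, coinvSum]
  conv_rhs => rw [← finsum_comp_equiv e]
  refine finsum_congr fun q => ?_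
  have he : e q = Quotient.mk _ (Quotient.out q * ⟨n, hn⟩) := by
    conv_lhs => rw [← Quotient.out_eq q]
    exact Quotient.congr_mk _ _ _
  rw [← mul_assoc]
  exact mk_apply_mul_eq_of_mk_eq hf (n₁ := Quotient.out q * ⟨n, hn⟩) (n₂ := Quotient.out (e q))
    (by rw [Quotient.out_eq, he]) g

end Coinvariants

section SemidirectProduct

variable {V : Type} [AddCommGroup V] [Module C V] {K P M N : Subgroup G}
  {ρ : Representation C ↥K V}

/-- Uniqueness of the decomposition `P = M ⋉ N` forces the `M`-part of an element of `K ∩ P`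
into `K`. -/
lemma mem_of_mul_mul_mem (hMP : M ≤ P) (hNP : N ≤ P)
    (hNnormal : ∀ p ∈ P, ∀ n' ∈ N, p * n' * p⁻¹ ∈ N) (hMN : M ⊓ N = ⊥)
    (hKP : ∀ x ∈ K ⊓ P, ∃ m ∈ K ⊓ M, ∃ n' ∈ K ⊓ N, x = m * n')
    {n μ ν : G} (hn : n ∈ N) (hμ : μ ∈ M) (hν : ν ∈ N) (h : n * (μ * ν) ∈ K) : μ ∈ K := by
  obtain ⟨a, ha, b, hb, hab⟩ :=
    hKP _ (Subgroup.mem_inf.mpr ⟨h, mul_mem (hNP hn) (mul_mem (hMP hμ) (hNP hν))⟩)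
  have hconj : μ⁻¹ * n⁻¹ * μ⁻¹⁻¹ ∈ N := hNnormal _ (inv_mem (hMP hμ)) _ (inv_mem hn)
  have hMN' : a⁻¹ * μ ∈ M ⊓ N := by
    refine Subgroup.mem_inf.mpr ⟨mul_mem (inv_mem ha.2) hμ, ?_⟩
    rw [show a⁻¹ * μ = b * ν⁻¹ * (μ⁻¹ * n⁻¹ * μ⁻¹⁻¹) by
      rw [show a = n * (μ * ν) * b⁻¹ by rw [hab]; group]; group]
    exact mul_mem (mul_mem hb.2 (inv_mem hν)) hconj
  rw [hMN, Subgroup.mem_bot, inv_mul_eq_one] at hMN'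
  exact hMN' ▸ ha.1

lemma coinvSum_unitFn (hMP : M ≤ P) (hNP : N ≤ P)
    (hNnormal : ∀ p ∈ P, ∀ n' ∈ N, p * n' * p⁻¹ ∈ N) (hMN : M ⊓ N = ⊥)
    (hKP : ∀ x ∈ K ⊓ P, ∃ m ∈ K ⊓ M, ∃ n' ∈ K ⊓ N, x = m * n')
    (w : V) {μ ν : G} (hμ : μ ∈ M) (hν : ν ∈ N) :
    coinvSum K N ρ (unitFn K ρ w) (μ * ν) =
      if h : μ ∈ K then Submodule.Quotient.mk (ρ ⟨μ, h⟩ w) else 0 := by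
  split_ifs with hμK
  · let n₀ : ↥N := ⟨μ * ν⁻¹ * μ⁻¹, hNnormal μ (hMP hμ) _ (inv_mem hν)⟩
    rw [coinvSum, finsum_eq_single _ (Quotient.mk _ n₀)]
    · rw [mk_apply_mul_eq_of_mk_eq (unitFn_mem K ρ w).1 (Quotient.out_eq _),
        show (n₀ : G) * (μ * ν) = μ by simp only [n₀]; group, unitFn, dif_pos hμK]
    · intro q hq
      rw [unitFn, dif_neg, Submodule.Quotient.mk_zero]
      intro h
      refine hq ?_
      rw [← Quotient.out_eq q, mk_eq_mk_iff_mul_inv_mem,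
        show (n₀ : G) * (↑(Quotient.out q))⁻¹ = μ * (↑(Quotient.out q) * (μ * ν))⁻¹ by
          simp only [n₀]; group]
      exact mul_mem hμK (inv_mem h)
  · refine finsum_eq_zero_of_forall_eq_zero fun q => ?_
    rw [unitFn, dif_neg fun h => hμK (mem_of_mul_mul_mem hMP hNP hNnormal hMN hKP
      (Quotient.out q).2 hμ hν h), Submodule.Quotient.mk_zero]

end SemidirectProduct

section Intertwiner

variable {V : Type} [AddCommGroup V] [Module C V] {K P M N : Subgroup G}
  {ρ : Representation C ↥K V}
  {hnorm : ∀ (m : ↥(K ⊓ M)) (n' : G), n' ∈ K ⊓ N → ↑m * n' * (↑m)⁻¹ ∈ K ⊓ N}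

lemma HomG_apply_cIndRep {W : Type} [AddCommGroup W] [Module C W] {τ : Representation C ↥P W}
    {I : ↥(cInd K ρ) →ₗ[C] ↥(fInd P τ)} (hI : I ∈ HomG K P ρ τ) (g : G) (f : ↥(cInd K ρ))
    (x : G) : (↑(I (cIndRep K ρ g f)) : G → W) x = (↑(I f) : G → W) (x * g) := by
  rw [show I (cIndRep K ρ g f) = fIndRep P τ g (I f) from LinearMap.congr_fun (hI g) f]
  rfl

lemma apply_unitElt_mul_of_charJ {τ : Representation C ↥P ↥(cIndBar K M N ρ hnorm)}
    {I : ↥(cInd K ρ) →ₗ[C] ↥(fInd P τ)} (hI : I ∈ HomG K P ρ τ)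
    (hj : charJ K P M N ρ hnorm τ I LinearMap.id) (w : V) {p k : G} (hp : p ∈ P) (hk : k ∈ K) :
    (↑(I (unitElt K ρ w)) : G → ↥(cIndBar K M N ρ hnorm)) (p * k) =
      τ ⟨p, hp⟩ (unitBar K M N ρ hnorm (ρ ⟨k, hk⟩ w)) := by
  have at_k : (↑(I (unitElt K ρ w)) : G → ↥(cIndBar K M N ρ hnorm)) k =
      unitBar K M N ρ hnorm (ρ ⟨k, hk⟩ w) := by
    calc (↑(I (unitElt K ρ w)) : G → ↥(cIndBar K M N ρ hnorm)) k
        = (↑(I (cIndRep K ρ k (unitElt K ρ w))) : G → ↥(cIndBar K M N ρ hnorm)) 1 := by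
          rw [HomG_apply_cIndRep hI, one_mul]
      _ = unitBar K M N ρ hnorm (ρ ⟨k, hk⟩ w) := by
          rw [cIndRep_unitElt_s4 hk]; exact (hj _).symm
  rw [← at_k]
  exact (I (unitElt K ρ w)).2 ⟨p, hp⟩ k

lemma rep_mul_eq_cIndRep {τ : Representation C ↥P ↥(cIndBar K M N ρ hnorm)} (hMP : M ≤ P)
    (hNP : N ≤ P) (hτN : ∀ x : ↥P, (x : G) ∈ N → τ x = 1)
    (hτM : ∀ (x : ↥P) (hx : (x : G) ∈ M),
      τ x = cIndRep ((K ⊓ M).subgroupOf M) (rhoBar K M N ρ hnorm) ⟨↑x, hx⟩)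
    {m' n' : G} (hm' : m' ∈ M) (hn' : n' ∈ N) (hp : m' * n' ∈ P) :
    τ ⟨m' * n', hp⟩ = cIndRep ((K ⊓ M).subgroupOf M) (rhoBar K M N ρ hnorm) ⟨m', hm'⟩ := by
  rw [show (⟨m' * n', hp⟩ : ↥P) = ⟨m', hMP hm'⟩ * ⟨n', hNP hn'⟩ from rfl, map_mul,
    hτN ⟨n', hNP hn'⟩ hn', hτM ⟨m', hMP hm'⟩ hm']
  exact mul_one _

lemma coe_unitBar_apply (w : V) (x : ↥M) :
    (↑(unitBar K M N ρ hnorm w) : ↥M → V ⧸ coinvKer K N ρ) x =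
      if h : (x : G) ∈ K then Submodule.Quotient.mk (ρ ⟨x, h⟩ w) else 0 := by
  by_cases hx : (x : G) ∈ K
  · have hx' : x ∈ (K ⊓ M).subgroupOf M := Subgroup.mem_subgroupOf.mpr ⟨hx, x.2⟩
    rw [dif_pos hx]
    exact dif_pos hx'
  · have hx' : x ∉ (K ⊓ M).subgroupOf M := fun h => hx (Subgroup.mem_subgroupOf.mp h).1
    rw [dif_neg hx]
    exact dif_neg hx'

theorem coe_apply_one_eq_coinvSum (hMP : M ≤ P) (hNP : N ≤ P)
    (hNnormal : ∀ p ∈ P, ∀ n' ∈ N, p * n' * p⁻¹ ∈ N) (hMN : M ⊓ N = ⊥)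
    (hPprod : ∀ p ∈ P, ∃ m ∈ M, ∃ n' ∈ N, p = m * n')
    (hG : ∀ g : G, ∃ k ∈ K, ∃ p ∈ P, g = k * p)
    (hKP : ∀ x ∈ K ⊓ P, ∃ m ∈ K ⊓ M, ∃ n' ∈ K ⊓ N, x = m * n')
    {τ : Representation C ↥P ↥(cIndBar K M N ρ hnorm)} (hτN : ∀ x : ↥P, (x : G) ∈ N → τ x = 1)
    (hτM : ∀ (x : ↥P) (hx : (x : G) ∈ M),
      τ x = cIndRep ((K ⊓ M).subgroupOf M) (rhoBar K M N ρ hnorm) ⟨↑x, hx⟩)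
    {I : ↥(cInd K ρ) →ₗ[C] ↥(fInd P τ)} (hI : I ∈ HomG K P ρ τ)
    (hj : charJ K P M N ρ hnorm τ I LinearMap.id) (f : ↥(cInd K ρ)) (m : ↥M) :
    (↑((↑(I f) : G → ↥(cIndBar K M N ρ hnorm)) 1) : ↥M → V ⧸ coinvKer K N ρ) m =
      coinvSum K N ρ f m := by
  revert m
  refine cInd_induction (p := fun f => ∀ m : ↥M,
    (↑((↑(I f) : G → ↥(cIndBar K M N ρ hnorm)) 1) : ↥M → V ⧸ coinvKer K N ρ) m =
      coinvSumₗ K N ρ m f) ?_ ?_ ?_ f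
  · intro m
    simp only [map_zero]
    rfl
  · intro f f' hf hf' m
    simp only [map_add, Submodule.coe_add, Pi.add_apply, hf, hf']
  · intro g w m
    obtain ⟨k, hk, p, hp, hkp⟩ := hG g⁻¹
    obtain ⟨m', hm', n', hn', hmn⟩ := hPprod p⁻¹ (inv_mem hp)
    obtain rfl : g = m' * n' * k⁻¹ := by rw [← hmn, ← mul_inv_rev, ← hkp, inv_inv]
    rw [HomG_apply_cIndRep hI, one_mul,
      apply_unitElt_mul_of_charJ hI hj w (mul_mem (hMP hm') (hNP hn')) (inv_mem hk),
      rep_mul_eq_cIndRep hMP hNP hτN hτM hm' hn', coinvSumₗ_apply, map_mul, Module.End.mul_apply,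
      cIndRep_unitElt_s4 (inv_mem hk), coinvSum_cIndRep, ← mul_assoc]
    exact (coe_unitBar_apply (hnorm := hnorm) _ (m * ⟨m', hm'⟩)).trans
      (coinvSum_unitFn (ρ := ρ) hMP hNP hNnormal hMN hKP _ (mul_mem m.2 hm') hn').symm

end Intertwiner

section HeckeAlgebra

variable {V : Type} [AddCommGroup V] [Module C V] {K N : Subgroup G}
  {ρ : Representation C ↥K V} {Φ : G → Module.End C V}

lemma apply_mem_cInd_of_mem_hecke
    (hA1 : ∀ g : G, ∃ S : Finset G, ∀ x : G,
      (∃ k ∈ K, ∃ k' ∈ K, x = k * g * k') → ∃ s ∈ S, ∃ k ∈ K, x = k * s)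
    (hΦ : Φ ∈ Hecke K ρ) (v : V) : (fun g => Φ g v) ∈ cInd K ρ := by
  obtain ⟨S, hS⟩ := hΦ.2
  refine ⟨fun k x => by
    change Φ (↑k * x) v = ρ k (Φ x v); rw [hecke_apply_mul_left hΦ k.2]; rfl,
    S.biUnion fun s => (hA1 s).choose, fun x hx => ?_⟩
  obtain ⟨s, hs, hdouble⟩ := hS x fun h => hx (by simp [h])
  obtain ⟨s', hs', k, hk, rfl⟩ := (hA1 s).choose_spec x hdouble
  exact ⟨s', Finset.mem_biUnion.mpr ⟨s, hs, hs'⟩, k, hk, rfl⟩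

def heckeApply
    (hA1 : ∀ g : G, ∃ S : Finset G, ∀ x : G,
      (∃ k ∈ K, ∃ k' ∈ K, x = k * g * k') → ∃ s ∈ S, ∃ k ∈ K, x = k * s)
    (hΦ : Φ ∈ Hecke K ρ) : V →ₗ[C] ↥(cInd K ρ) where
  toFun v := ⟨fun g => Φ g v, apply_mem_cInd_of_mem_hecke hA1 hΦ v⟩
  map_add' v v' := by ext; simp
  map_smul' c v := by ext; simp

lemma coinvSum_hecke_eq_of_mk_eq {P : Subgroup G}
    (hNnormal : ∀ p ∈ P, ∀ n' ∈ N, p * n' * p⁻¹ ∈ N)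
    (hA1 : ∀ g : G, ∃ S : Finset G, ∀ x : G,
      (∃ k ∈ K, ∃ k' ∈ K, x = k * g * k') → ∃ s ∈ S, ∃ k ∈ K, x = k * s)
    (hΦ : Φ ∈ Hecke K ρ) {m : G} (hm : m ∈ P) {v v' : V}
    (h : Submodule.Quotient.mk (p := coinvKer K N ρ) v = Submodule.Quotient.mk v') :
    coinvSum K N ρ (fun g => Φ g v) m = coinvSum K N ρ (fun g => Φ g v') m := by
  let F : V →ₗ[C] V ⧸ coinvKer K N ρ := coinvSumₗ K N ρ m ∘ₗ heckeApply hA1 hΦ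
  have hker : coinvKer K N ρ ≤ LinearMap.ker F := by
    refine Submodule.span_le.mpr ?_
    rintro _ ⟨n₀, hn₀, w, rfl⟩
    rw [SetLike.mem_coe, LinearMap.mem_ker, map_sub, sub_eq_zero]
    have hΦn₀ : (fun g => Φ g (ρ ⟨n₀, hn₀.1⟩ w)) = fun g => Φ (g * n₀) w :=
      funext fun g => by rw [hecke_apply_mul_right hΦ g hn₀.1]; rfl
    change coinvSum K N ρ (fun g => Φ g (ρ ⟨n₀, hn₀.1⟩ w)) m = coinvSum K N ρ (fun g => Φ g w) m
    rw [hΦn₀, coinvSum_comp_mul_right (fun g => Φ g w),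
      show m * n₀ = m * n₀ * m⁻¹ * m by group]
    exact coinvSum_mul_left (heckeApply hA1 hΦ w).2.1 (hNnormal m hm n₀ hn₀.2) m
  have hvv' := hker ((Submodule.Quotient.eq _).mp h)
  rwa [LinearMap.mem_ker, map_sub, sub_eq_zero] at hvv'

end HeckeAlgebra

theorem statement4_general {V : Type} [AddCommGroup V] [Module C V]
    (K P M N : Subgroup G)
    (hMP : M ≤ P) (hNP : N ≤ P)
    (hNnormal : ∀ p ∈ P, ∀ n' ∈ N, p * n' * p⁻¹ ∈ N)
    (hMN : M ⊓ N = ⊥)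
    (hPprod : ∀ p ∈ P, ∃ m ∈ M, ∃ n' ∈ N, p = m * n')
    (hG : ∀ g : G, ∃ k ∈ K, ∃ p ∈ P, g = k * p)
    (hKP : ∀ x ∈ K ⊓ P, ∃ m ∈ K ⊓ M, ∃ n' ∈ K ⊓ N, x = m * n')
    (hnorm : ∀ (m : ↥(K ⊓ M)) (n' : G), n' ∈ K ⊓ N → ↑m * n' * (↑m)⁻¹ ∈ K ⊓ N)
    (hA1 : ∀ g : G, ∃ S : Finset G, ∀ x : G,
      (∃ k ∈ K, ∃ k' ∈ K, x = k * g * k') → ∃ s ∈ S, ∃ k ∈ K, x = k * s)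
    (ρ : Representation C ↥K V)
    -- the C[P]-module structure τ₀ on W₀ = ind_{K∩M}^M V_{K∩N}
    (τ₀ : Representation C ↥P ↥(cIndBar K M N ρ hnorm))
    (hτ₀N : ∀ x : ↥P, (x : G) ∈ N → τ₀ x = 1)
    (hτ₀M : ∀ (x : ↥P) (hx : (x : G) ∈ M),
      τ₀ x = cIndRep ((K ⊓ M).subgroupOf M) (rhoBar K M N ρ hnorm) ⟨↑x, hx⟩)
    -- I₀ = j_{W₀}⁻¹(id)
    (I₀ : ↥(cInd K ρ) →ₗ[C] ↥(fInd P τ₀))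
    (hI₀mem : I₀ ∈ HomG K P ρ τ₀)
    (hI₀ : charJ K P M N ρ hnorm τ₀ I₀
      (LinearMap.id : ↥(cIndBar K M N ρ hnorm) →ₗ[C] ↥(cIndBar K M N ρ hnorm))) :
    -- finitely many of the Φ(nm)(v), n ∈ (N∩K)\N, are nonzero
    (∀ Φ ∈ Hecke K ρ, ∀ (m : ↥M) (v : V),
      {q : Quotient (QuotientGroup.rightRel ((K ⊓ N).subgroupOf N)) |
        Φ ((↑(Quotient.out q) : G) * ↑m) v ≠ 0}.Finite) ∧
    -- the sum of the images in V_{K∩N} does not depend on the choice of representatives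
    (∀ Φ ∈ Hecke K ρ, ∀ (m : ↥M) (v : V),
      ∀ rep : Quotient (QuotientGroup.rightRel ((K ⊓ N).subgroupOf N)) → ↥N,
        (∀ q, Quotient.mk (QuotientGroup.rightRel ((K ⊓ N).subgroupOf N)) (rep q) = q) →
        ∑ᶠ q : Quotient (QuotientGroup.rightRel ((K ⊓ N).subgroupOf N)),
            Submodule.Quotient.mk (p := coinvKer K N ρ) (Φ ((↑(rep q) : G) * ↑m) v)
          = ∑ᶠ q : Quotient (QuotientGroup.rightRel ((K ⊓ N).subgroupOf N)),
            Submodule.Quotient.mk (p := coinvKer K N ρ)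
              (Φ ((↑(Quotient.out q) : G) * ↑m) v)) ∧
    -- ... and depends only on the image of v in V_{K∩N}
    (∀ Φ ∈ Hecke K ρ, ∀ (m : ↥M) (v v' : V),
      Submodule.Quotient.mk (p := coinvKer K N ρ) v
        = Submodule.Quotient.mk (p := coinvKer K N ρ) v' →
      ∑ᶠ q : Quotient (QuotientGroup.rightRel ((K ⊓ N).subgroupOf N)),
          Submodule.Quotient.mk (p := coinvKer K N ρ)
            (Φ ((↑(Quotient.out q) : G) * ↑m) v)
        = ∑ᶠ q : Quotient (QuotientGroup.rightRel ((K ⊓ N).subgroupOf N)),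
          Submodule.Quotient.mk (p := coinvKer K N ρ)
            (Φ ((↑(Quotient.out q) : G) * ↑m) v')) ∧
    -- the formula for 𝒮' on the Hecke algebras
    (∀ Φ ∈ Hecke K ρ, ∀ b ∈ EndG K ρ,
      (∀ f : ↥(cInd K ρ), (↑(b f) : G → V) = convAct K Φ ↑f) →
      ∀ u : ↥(cIndBar K M N ρ hnorm) →ₗ[C] ↥(cIndBar K M N ρ hnorm),
        u ∈ EndBar K M N ρ hnorm →
        charJ K P M N ρ hnorm τ₀ (I₀ ∘ₗ b) u →
        ∀ Ψ : ↥M → Module.End C (V ⧸ coinvKer K N ρ),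
          Ψ ∈ Hecke ((K ⊓ M).subgroupOf M) (rhoBar K M N ρ hnorm) →
          (∀ h : ↥(cIndBar K M N ρ hnorm),
            (↑(u h) : ↥M → V ⧸ coinvKer K N ρ)
              = convAct ((K ⊓ M).subgroupOf M) Ψ ↑h) →
          ∀ (m : ↥M) (v : V),
            Ψ m (Submodule.Quotient.mk (p := coinvKer K N ρ) v)
              = ∑ᶠ q : Quotient (QuotientGroup.rightRel ((K ⊓ N).subgroupOf N)),
                Submodule.Quotient.mk (p := coinvKer K N ρ)
                  (Φ ((↑(Quotient.out q) : G) * ↑m) v)) := by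
  refine ⟨fun Φ hΦ m v => finite_setOf_apply_ne_zero (apply_mem_cInd_of_mem_hecke hA1 hΦ v) m,
    fun Φ hΦ m v rep hrep =>
      coinvSum_eq_of_out (f := fun g => Φ g v) (apply_mem_cInd_of_mem_hecke hA1 hΦ v).1 rep hrep m,
    fun Φ hΦ m v v' => coinvSum_hecke_eq_of_mk_eq hNnormal hA1 hΦ (hMP m.2), ?_⟩
  intro Φ hΦ b _ hbconv u _ hchar Ψ hΨ hΨconv m v
  calc Ψ m (Submodule.Quotient.mk v)
      = convAct _ Ψ ↑(unitBar K M N ρ hnorm v) m := (convAct_unitFn hΨ _ m).symm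
    _ = (↑(u (unitBar K M N ρ hnorm v)) : ↥M → V ⧸ coinvKer K N ρ) m :=
        (congrFun (hΨconv _) m).symm
    _ = (↑((↑(I₀ (b (unitElt K ρ v))) : G → ↥(cIndBar K M N ρ hnorm)) 1) :
          ↥M → V ⧸ coinvKer K N ρ) m := by rw [hchar v]; rfl
    _ = coinvSum K N ρ ↑(b (unitElt K ρ v)) m :=
        coe_apply_one_eq_coinvSum hMP hNP hNnormal hMN hPprod hG hKP hτ₀N hτ₀M hI₀mem hI₀ _ m
    _ = coinvSum K N ρ (fun g => Φ g v) m := by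
        rw [hbconv]
        exact congrArg (coinvSum K N ρ · m) (funext (convAct_unitFn hΦ v))

theorem statement4 {V : Type} [AddCommGroup V] [Module C V] [FiniteDimensional C V]
    (K P M N : Subgroup G)
    (hMP : M ≤ P) (hNP : N ≤ P)
    (hNnormal : ∀ p ∈ P, ∀ n' ∈ N, p * n' * p⁻¹ ∈ N)
    (hMN : M ⊓ N = ⊥)
    (hPprod : ∀ p ∈ P, ∃ m ∈ M, ∃ n' ∈ N, p = m * n')
    (hG : ∀ g : G, ∃ k ∈ K, ∃ p ∈ P, g = k * p)
    (hKP : ∀ x ∈ K ⊓ P, ∃ m ∈ K ⊓ M, ∃ n' ∈ K ⊓ N, x = m * n')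
    (hnorm : ∀ (m : ↥(K ⊓ M)) (n' : G), n' ∈ K ⊓ N → ↑m * n' * (↑m)⁻¹ ∈ K ⊓ N)
    (hA1 : ∀ g : G, ∃ S : Finset G, ∀ x : G,
      (∃ k ∈ K, ∃ k' ∈ K, x = k * g * k') → ∃ s ∈ S, ∃ k ∈ K, x = k * s)
    (hA1M : ∀ m : ↥M, ∃ S : Finset ↥M, ∀ x : ↥M,
      (∃ k ∈ (K ⊓ M).subgroupOf M, ∃ k' ∈ (K ⊓ M).subgroupOf M, x = k * m * k') →
      ∃ s ∈ S, ∃ k ∈ (K ⊓ M).subgroupOf M, x = k * s)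
    (ρ : Representation C ↥K V)
    -- the C[P]-module structure τ₀ on W₀ = ind_{K∩M}^M V_{K∩N}
    (τ₀ : Representation C ↥P ↥(cIndBar K M N ρ hnorm))
    (hτ₀N : ∀ x : ↥P, (x : G) ∈ N → τ₀ x = 1)
    (hτ₀M : ∀ (x : ↥P) (hx : (x : G) ∈ M),
      τ₀ x = cIndRep ((K ⊓ M).subgroupOf M) (rhoBar K M N ρ hnorm) ⟨↑x, hx⟩)
    -- I₀ = j_{W₀}⁻¹(id)
    (I₀ : ↥(cInd K ρ) →ₗ[C] ↥(fInd P τ₀))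
    (hI₀mem : I₀ ∈ HomG K P ρ τ₀)
    (hI₀ : charJ K P M N ρ hnorm τ₀ I₀
      (LinearMap.id : ↥(cIndBar K M N ρ hnorm) →ₗ[C] ↥(cIndBar K M N ρ hnorm))) :
    -- finitely many of the Φ(nm)(v), n ∈ (N∩K)\N, are nonzero
    (∀ Φ ∈ Hecke K ρ, ∀ (m : ↥M) (v : V),
      {q : Quotient (QuotientGroup.rightRel ((K ⊓ N).subgroupOf N)) |
        Φ ((↑(Quotient.out q) : G) * ↑m) v ≠ 0}.Finite) ∧
    -- the sum of the images in V_{K∩N} does not depend on the choice of representatives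
    (∀ Φ ∈ Hecke K ρ, ∀ (m : ↥M) (v : V),
      ∀ rep : Quotient (QuotientGroup.rightRel ((K ⊓ N).subgroupOf N)) → ↥N,
        (∀ q, Quotient.mk (QuotientGroup.rightRel ((K ⊓ N).subgroupOf N)) (rep q) = q) →
        ∑ᶠ q : Quotient (QuotientGroup.rightRel ((K ⊓ N).subgroupOf N)),
            Submodule.Quotient.mk (p := coinvKer K N ρ) (Φ ((↑(rep q) : G) * ↑m) v)
          = ∑ᶠ q : Quotient (QuotientGroup.rightRel ((K ⊓ N).subgroupOf N)),
            Submodule.Quotient.mk (p := coinvKer K N ρ)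
              (Φ ((↑(Quotient.out q) : G) * ↑m) v)) ∧
    -- ... and depends only on the image of v in V_{K∩N}
    (∀ Φ ∈ Hecke K ρ, ∀ (m : ↥M) (v v' : V),
      Submodule.Quotient.mk (p := coinvKer K N ρ) v
        = Submodule.Quotient.mk (p := coinvKer K N ρ) v' →
      ∑ᶠ q : Quotient (QuotientGroup.rightRel ((K ⊓ N).subgroupOf N)),
          Submodule.Quotient.mk (p := coinvKer K N ρ)
            (Φ ((↑(Quotient.out q) : G) * ↑m) v)
        = ∑ᶠ q : Quotient (QuotientGroup.rightRel ((K ⊓ N).subgroupOf N)),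
          Submodule.Quotient.mk (p := coinvKer K N ρ)
            (Φ ((↑(Quotient.out q) : G) * ↑m) v')) ∧
    -- the formula for 𝒮' on the Hecke algebras
    (∀ Φ ∈ Hecke K ρ, ∀ b ∈ EndG K ρ,
      (∀ f : ↥(cInd K ρ), (↑(b f) : G → V) = convAct K Φ ↑f) →
      ∀ u : ↥(cIndBar K M N ρ hnorm) →ₗ[C] ↥(cIndBar K M N ρ hnorm),
        u ∈ EndBar K M N ρ hnorm →
        charJ K P M N ρ hnorm τ₀ (I₀ ∘ₗ b) u →
        ∀ Ψ : ↥M → Module.End C (V ⧸ coinvKer K N ρ),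
          Ψ ∈ Hecke ((K ⊓ M).subgroupOf M) (rhoBar K M N ρ hnorm) →
          (∀ h : ↥(cIndBar K M N ρ hnorm),
            (↑(u h) : ↥M → V ⧸ coinvKer K N ρ)
              = convAct ((K ⊓ M).subgroupOf M) Ψ ↑h) →
          ∀ (m : ↥M) (v : V),
            Ψ m (Submodule.Quotient.mk (p := coinvKer K N ρ) v)
              = ∑ᶠ q : Quotient (QuotientGroup.rightRel ((K ⊓ N).subgroupOf N)),
                Submodule.Quotient.mk (p := coinvKer K N ρ)
                  (Φ ((↑(Quotient.out q) : G) * ↑m) v)) :=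
  statement4_general K P M N hMP hNP hNnormal hMN hPprod hG hKP hnorm hA1 ρ τ₀ hτ₀N hτ₀M I₀ hI₀mem
    hI₀

end Paper
end
end
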